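/- (Mellin inversion for the theta series.) For every real t > 0 and every real c > 1, ∑_{n=1}^∞ e^{-π n² t} = (1/(2π)) ∫_ℝ t^{-(c+iu)} π^{-(c+iu)} Γ(c+iu) ζ(2(c+iu)) du, where the integral over u ∈ ℝ converges absolutely. -/

import Mathlib

/-!
Write `θ(x) = ∑_{n ≥ 1} exp (-π n² x)`. It is half the even Hurwitz kernel at `0` minus its
constant term, so Mathlib's functional-equation pair for that kernel gives its Mellin transform
`π^{-s} Γ(s) ζ(2s)` for `Re s > 1/2`, and Mellin inversion recovers `θ(t)`. The inversion needs
the transform to be integrable on the line `Re s = c`: there `ζ(2s)` is bounded by `ζ(2c)`, and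
`Γ` decays like `|s|⁻²` by `Γ(s + 2) = s (s + 1) Γ(s)` and `‖Γ(s)‖ ≤ Γ(Re s)`.
-/

open MeasureTheory Complex HurwitzZeta

/-- `evenKernel 0 x = ∑_{n ∈ ℤ} exp (-π n² x)`. -/
noncomputable def thetaTail (x : ℝ) : ℂ := ((evenKernel 0 x : ℂ) - 1) / 2

lemma thetaTail_eq_tsum {x : ℝ} (hx : 0 < x) :
    thetaTail x = ((∑' n : ℕ, Real.exp (-Real.pi * ((n : ℝ) + 1) ^ 2 * x) : ℝ) : ℂ) := by
  have h := (hasSum_nat_cosKernel₀ 0 hx).div_const 2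
  simp only [mul_zero, zero_mul, Real.cos_zero, mul_one, QuotientAddGroup.mk_zero,
    mul_div_cancel_left₀ _ (two_ne_zero (α := ℝ))] at h
  rw [h.tsum_eq, thetaTail, evenKernel_eq_cosKernel_of_zero]
  push_cast
  rfl

lemma continuousAt_thetaTail {x : ℝ} (hx : 0 < x) : ContinuousAt thetaTail x :=
  (((continuousOn_evenKernel 0).continuousAt (Ioi_mem_nhds hx)).ofReal.sub
    continuousAt_const).div_const 2

lemma hasMellin_thetaTail {s : ℂ} (hs : 1 / 2 < s.re) :
    HasMellin thetaTail s (completedRiemannZeta (2 * s)) := by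
  have h := (hurwitzEvenFEPair 0).hasMellin (s := s) (by simpa [hurwitzEvenFEPair] using hs)
  have hθ : thetaTail = fun x ↦
      (1 / 2 : ℂ) • ((hurwitzEvenFEPair 0).f x - (hurwitzEvenFEPair 0).f₀) := by
    ext x
    simp [thetaTail, hurwitzEvenFEPair, div_eq_inv_mul]
  have hΛ : completedRiemannZeta (2 * s) = (1 / 2 : ℂ) • (hurwitzEvenFEPair 0).Λ s := by
    rw [← completedHurwitzZetaEven_zero, completedHurwitzZetaEven,
      mul_div_cancel_left₀ _ two_ne_zero, smul_eq_mul, one_div, inv_mul_eq_div]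
  rw [hθ, hΛ, ← h.2]
  exact hasMellin_const_smul h.1 _

lemma completedRiemannZeta_eq_Gammaℝ_mul {s : ℂ} (hs : 0 < s.re) :
    completedRiemannZeta s = Gammaℝ s * riemannZeta s := by
  rw [riemannZeta_def_of_ne_zero (ne_zero_of_re_pos hs),
    mul_div_cancel₀ _ (Gammaℝ_ne_zero_of_re_pos hs)]

lemma mellin_thetaTail {s : ℂ} (hs : 1 / 2 < s.re) :
    mellin thetaTail s = (Real.pi : ℂ) ^ (-s) * Gamma s * riemannZeta (2 * s) := by
  have h2s : 0 < (2 * s).re := by simp; linarith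
  rw [(hasMellin_thetaTail hs).2, completedRiemannZeta_eq_Gammaℝ_mul h2s, Gammaℝ_def,
    mul_div_cancel_left₀ _ two_ne_zero, neg_div, mul_div_cancel_left₀ _ two_ne_zero, mul_assoc]

lemma Complex.norm_Gamma_le_Gamma_re {z : ℂ} (hz : 0 < z.re) : ‖Gamma z‖ ≤ Real.Gamma z.re := by
  rw [Gamma_eq_integral hz, Real.Gamma_eq_integral hz, GammaIntegral]
  refine (norm_integral_le_integral_norm _).trans_eq ?_
  refine setIntegral_congr_fun measurableSet_Ioi fun x hx ↦ ?_
  rw [norm_mul, norm_real, Real.norm_of_nonneg (Real.exp_pos _).le,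
    norm_cpow_eq_rpow_re_of_pos hx, sub_re, one_re]

lemma Complex.norm_Gamma_le_div_normSq {z : ℂ} (hz : 0 < z.re) :
    ‖Gamma z‖ ≤ Real.Gamma (z.re + 2) / normSq z := by
  have hz1 : 0 < (z + 1).re := by simp; linarith
  have hrec : Gamma (z + 2) = (z + 1) * z * Gamma z := by
    rw [show z + 2 = z + 1 + 1 by ring, Gamma_add_one _ (ne_zero_of_re_pos hz1),
      Gamma_add_one _ (ne_zero_of_re_pos hz), mul_assoc]
  have hnorm : ‖z‖ ≤ ‖z + 1‖ := by
    rw [← sq_le_sq₀ (norm_nonneg _) (norm_nonneg _), ← normSq_eq_norm_sq, ← normSq_eq_norm_sq,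
      normSq_apply, normSq_apply]
    simp only [add_re, one_re, add_im, one_im, add_zero]
    nlinarith
  rw [normSq_eq_norm_sq, le_div_iff₀ (pow_pos (norm_pos_iff.mpr (ne_zero_of_re_pos hz)) 2)]
  calc ‖Gamma z‖ * ‖z‖ ^ 2 ≤ ‖Gamma z‖ * (‖z + 1‖ * ‖z‖) := by rw [sq]; gcongr
    _ = ‖Gamma (z + 2)‖ := by rw [hrec, norm_mul, norm_mul]; ring
    _ ≤ Real.Gamma (z.re + 2) := by
      simpa using norm_Gamma_le_Gamma_re (z := z + 2) (by simp; linarith)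

lemma integrable_inv_sq_add_sq {c : ℝ} (hc : c ≠ 0) :
    Integrable fun u : ℝ ↦ (c ^ 2 + u ^ 2)⁻¹ := by
  refine ((integrable_inv_one_add_sq.comp_div hc).const_mul (c ^ 2)⁻¹).congr
    (.of_forall fun u ↦ ?_)
  field_simp

lemma Complex.continuous_Gamma_vertical {c : ℝ} (hc : 0 < c) :
    Continuous fun u : ℝ ↦ Gamma (c + u * I) := by
  refine continuous_iff_continuousAt.mpr fun u ↦
    (continuousAt_Gamma _ fun m hm ↦ ?_).comp (by fun_prop)
  have := congrArg re hm
  simp at this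
  linarith [(Nat.cast_nonneg m : (0 : ℝ) ≤ m)]

lemma Complex.integrable_Gamma_vertical {c : ℝ} (hc : 0 < c) :
    Integrable fun u : ℝ ↦ Gamma (c + u * I) := by
  refine ((integrable_inv_sq_add_sq hc.ne').const_mul (Real.Gamma (c + 2))).mono'
    (continuous_Gamma_vertical hc).aestronglyMeasurable (.of_forall fun u ↦ ?_)
  simpa [normSq_apply, div_eq_mul_inv, sq] using
    norm_Gamma_le_div_normSq (z := c + u * I) (by simpa)

lemma norm_riemannZeta_le_tsum {s : ℂ} (hs : 1 < s.re) :
    ‖riemannZeta s‖ ≤ ∑' n : ℕ, 1 / ((n : ℝ) + 1) ^ s.re := by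
  have hnorm (n : ℕ) : ‖1 / ((n : ℂ) + 1) ^ s‖ = 1 / ((n : ℝ) + 1) ^ s.re := by
    rw [norm_div, norm_one, ← norm_cpow_eq_rpow_re_of_pos (by positivity)]
    push_cast; rfl
  have hsum : Summable fun n : ℕ ↦ 1 / ((n : ℝ) + 1) ^ s.re := by
    refine ((Real.summable_one_div_nat_add_rpow 1 s.re).mpr hs).congr fun n ↦ ?_
    rw [abs_of_nonneg (by positivity)]
  rw [zeta_eq_tsum_one_div_nat_add_one_cpow hs, ← tsum_congr hnorm]
  exact norm_tsum_le_tsum_norm (hsum.congr fun n ↦ (hnorm n).symm)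

lemma continuousOn_riemannZeta : ContinuousOn riemannZeta {1}ᶜ := fun _ hs ↦
  (differentiableAt_riemannZeta hs).continuousAt.continuousWithinAt

lemma verticalIntegrable_mellin_thetaTail {c : ℝ} (hc : 1 / 2 < c) :
    VerticalIntegrable (mellin thetaTail) c := by
  set Z := ∑' n : ℕ, 1 / ((n : ℝ) + 1) ^ (2 * c)
  have hline (u : ℝ) : ((c : ℂ) + u * I).re = c := by simp
  have hline₂ (u : ℝ) : (2 * ((c : ℂ) + u * I)).re = 2 * c := by simp
  have hcont : Continuous fun u : ℝ ↦
      (Real.pi : ℂ) ^ (-((c : ℂ) + u * I)) * riemannZeta (2 * (c + u * I)) := by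
    refine .mul (.const_cpow (by fun_prop) (.inl (ofReal_ne_zero.mpr Real.pi_ne_zero)))
      (continuousOn_riemannZeta.comp_continuous (by fun_prop) fun u h ↦ ?_)
    have := hline₂ u
    rw [show 2 * ((c : ℂ) + u * I) = 1 from h, one_re] at this
    linarith
  have hbound (u : ℝ) :
      ‖(Real.pi : ℂ) ^ (-((c : ℂ) + u * I)) * riemannZeta (2 * (c + u * I))‖ ≤
        Real.pi ^ (-c) * Z := by
    rw [norm_mul, norm_cpow_eq_rpow_re_of_pos Real.pi_pos, neg_re, hline]
    gcongr
    have hζ := norm_riemannZeta_le_tsum (s := 2 * ((c : ℂ) + u * I)) (by rw [hline₂]; linarith)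
    rwa [hline₂] at hζ
  refine ((integrable_Gamma_vertical (by linarith)).bdd_mul hcont.aestronglyMeasurable
    (.of_forall hbound)).congr (.of_forall fun u ↦ ?_)
  dsimp only
  rw [mellin_thetaTail (by rw [hline]; exact hc)]
  ring

lemma Complex.VerticalIntegrable.integrable_cpow_smul {E : Type*} [NormedAddCommGroup E]
    [NormedSpace ℂ E] {f : ℂ → E} {σ : ℝ} (hf : VerticalIntegrable f σ) {x : ℝ} (hx : 0 < x) :
    Integrable fun y : ℝ ↦ (x : ℂ) ^ (-(σ + y * I)) • f (σ + y * I) := by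
  refine hf.bdd_smul (x ^ (-σ)) ?_ (.of_forall fun y ↦ ?_)
  · exact (Continuous.const_cpow (by fun_prop)
      (.inl (ofReal_ne_zero.mpr hx.ne'))).aestronglyMeasurable
  · rw [norm_cpow_eq_rpow_re_of_pos hx]
    simp

/-- Mellin inversion for the theta series: for `t > 0` and `c > 1`,
`∑_{n=1}^∞ e^{-π n² t} = (1/2π) ∫_ℝ t^{-(c+iu)} π^{-(c+iu)} Γ(c+iu) ζ(2(c+iu)) du`,
the integral converging absolutely. -/
theorem theta_mellin_inversion (t : ℝ) (ht : 0 < t) (c : ℝ) (hc : 1 < c) :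
    MeasureTheory.Integrable (fun u : ℝ =>
      (t : ℂ) ^ (-((c : ℂ) + (u : ℂ) * Complex.I)) *
        (Real.pi : ℂ) ^ (-((c : ℂ) + (u : ℂ) * Complex.I)) *
        Complex.Gamma ((c : ℂ) + (u : ℂ) * Complex.I) *
        riemannZeta (2 * ((c : ℂ) + (u : ℂ) * Complex.I))) ∧
    ((∑' n : ℕ, Real.exp (-Real.pi * ((n : ℝ) + 1) ^ 2 * t) : ℝ) : ℂ) =
      ((1 / (2 * Real.pi) : ℝ) : ℂ) *
        ∫ u : ℝ, (t : ℂ) ^ (-((c : ℂ) + (u : ℂ) * Complex.I)) *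
          (Real.pi : ℂ) ^ (-((c : ℂ) + (u : ℂ) * Complex.I)) *
          Complex.Gamma ((c : ℂ) + (u : ℂ) * Complex.I) *
          riemannZeta (2 * ((c : ℂ) + (u : ℂ) * Complex.I)) := by
  have hc' : 1 / 2 < c := by linarith
  have hintegrand : (fun u : ℝ ↦ (t : ℂ) ^ (-((c : ℂ) + u * I)) *
      (Real.pi : ℂ) ^ (-((c : ℂ) + u * I)) * Gamma (c + u * I) * riemannZeta (2 * (c + u * I))) =
      fun u : ℝ ↦ (t : ℂ) ^ (-((c : ℂ) + u * I)) • mellin thetaTail (c + u * I) := by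
    ext u
    rw [mellin_thetaTail (by simpa using hc'), smul_eq_mul]
    ring
  have hvert := verticalIntegrable_mellin_thetaTail hc'
  rw [hintegrand, ← thetaTail_eq_tsum ht, ← mellinInv_mellin_eq c thetaTail ht
    (hasMellin_thetaTail (by simpa using hc')).1 hvert (continuousAt_thetaTail ht), mellinInv,
    real_smul]
  exact ⟨hvert.integrable_cpow_smul ht, rfl⟩
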